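/- arXiv:2009.07614 — 2 statements merged into one kernel-verified Lean document; each statement's English description precedes it below -/
import Mathlib

section
/- For all x, y, z ∈ G one has φ(x,y,z) = ψ(z+x, −y−x) + ψ(z+x, y−x) + ψ(z−x, −y+x) + ψ(z−x, y+x) in ⋀[ℤ]² A. (This is equation (eq phi) of the paper, expressing φ in terms of the Manin 3-term expression ψ.) -/
noncomputable def wedge (R : Type*) [CommRing R] {M : Type*} [AddCommGroup M] [Module R M]
    (u v : M) : ⋀[R]^2 M :=
  ⟨ExteriorAlgebra.ιMulti R 2 ![u, v],
    ExteriorAlgebra.ιMulti_range R 2 (Set.mem_range_self _)⟩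

/-- The additive counterpart of `u(a,b,c,d) ∧ (1 - u(a,b,c,d))`, built from the
three-variable expression `φ`. -/
noncomputable def phi (R : Type*) [CommRing R] {M G : Type*} [AddCommGroup M] [Module R M]
    [AddCommGroup G] (g : G → M) (x y z : G) : ⋀[R]^2 M :=
  wedge R (g (z + x) + g (z - x)) (g (y + x) + g (y - x))
    + wedge R (g (y + x) + g (y - x)) (g (z + y) + g (z - y))
    + wedge R (g (z + y) + g (z - y)) (g (z + x) + g (z - x))

noncomputable def delta (R : Type*) [CommRing R] {M G : Type*} [AddCommGroup M] [Module R M]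
    [AddCommGroup G] (g : G → M) (a b c d : G) : ⋀[R]^2 M :=
  phi R g a b c + phi R g c d a + phi R g b a d + phi R g d c b

/-- The additive counterpart of the Manin 3-term expression
`g_a ∧ g_b + g_b ∧ g_c + g_c ∧ g_a` with `a + b + c = 0`. -/
noncomputable def psi (R : Type*) [CommRing R] {M G : Type*} [AddCommGroup M] [Module R M]
    [AddCommGroup G] (g : G → M) (a b : G) : ⋀[R]^2 M :=
  wedge R (g a) (g b) + wedge R (g b) (g (-a - b)) + wedge R (g (-a - b)) (g a)

lemma wedge_val (R : Type*) [CommRing R] {M : Type*} [AddCommGroup M] [Module R M]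
    (u v : M) : (wedge R u v : ExteriorAlgebra R M)
      = ExteriorAlgebra.ι R u * ExteriorAlgebra.ι R v := by
  simp [wedge, ExteriorAlgebra.ιMulti_apply, List.ofFn_succ]

lemma wedge_add_left (R : Type*) [CommRing R] {M : Type*} [AddCommGroup M] [Module R M]
    (u u' v : M) : wedge R (u + u') v = wedge R u v + wedge R u' v := by
  apply Subtype.ext
  push_cast [wedge_val]
  simp [add_mul]

lemma wedge_add_right (R : Type*) [CommRing R] {M : Type*} [AddCommGroup M] [Module R M]
    (u v v' : M) : wedge R u (v + v') = wedge R u v + wedge R u v' := by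
  apply Subtype.ext
  push_cast [wedge_val]
  simp [mul_add]

/-- Equation (eq phi) of Brunault, *On the K₄ group of modular curves*:
`φ` in terms of the Manin 3-term expression `ψ`. -/
theorem phi_eq_sum_psi {A G : Type*} [AddCommGroup A] [AddCommGroup G]
    (g : G → A) (hg : ∀ x : G, g (-x) = g x) (x y z : G) :
    phi ℤ g x y z =
      psi ℤ g (z + x) (-y - x) + psi ℤ g (z + x) (y - x)
        + psi ℤ g (z - x) (-y + x) + psi ℤ g (z - x) (y + x) := by
  simp only [phi, psi,
    show (-y - x : G) = -(y + x) by abel,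
    show (-(z + x) - -(y + x) : G) = -(z - y) by abel,
    show (-(z + x) - (y - x) : G) = -(z + y) by abel,
    show (-y + x : G) = -(y - x) by abel,
    show (-(z - x) - -(y - x) : G) = -(z - y) by abel,
    show (-(z - x) - (y + x) : G) = -(z + y) by abel,
    hg]
  simp only [wedge_add_left, wedge_add_right]
  abel
end

section
/- For every function a : ℤ/5ℤ → G one has Σ_{i∈ℤ/5ℤ} δ(a_i, a_{i+1}, a_{i+2}, a_{i+3}) = 0 in ⋀[ℤ]² A. (This is the five-term relation satisfied by the elements δ, equation (eq 5term) of the paper.) -/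
/-!
Write `e(x, y) = g(x + y) + g(x - y)`, which is symmetric in `x, y` because `g` is even. Then
`φ(x, y, z) = e(x,z) ∧ e(x,y) + e(x,y) ∧ e(y,z) + e(y,z) ∧ e(x,z)` changes sign under any
transposition of `x, y, z`. The twenty `φ`-terms of the five-term sum pair off: each pair consists
of a triple and its image under swapping the first two entries or reversing the order, so they
cancel.
-/

section FiveTerm

variable {α M : Type*} [AddCommGroup M]

theorem sum_zmod_five_eq_zero_of_antisymm (f : α → α → α → M)
    (hswap : ∀ x y z, f y x z = -f x y z) (hrev : ∀ x y z, f z y x = -f x y z)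
    (a : ZMod 5 → α) :
    ∑ i : ZMod 5, (f (a i) (a (i + 1)) (a (i + 2)) + f (a (i + 2)) (a (i + 3)) (a i)
      + f (a (i + 1)) (a i) (a (i + 3)) + f (a (i + 3)) (a (i + 2)) (a (i + 1))) = 0 := by
  change ∑ i : Fin 5, _ = _
  rw [Fin.sum_univ_five]
  change f (a 0) (a 1) (a 2) + f (a 2) (a 3) (a 0) + f (a 1) (a 0) (a 3) + f (a 3) (a 2) (a 1)
    + (f (a 1) (a 2) (a 3) + f (a 3) (a 4) (a 1) + f (a 2) (a 1) (a 4) + f (a 4) (a 3) (a 2))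
    + (f (a 2) (a 3) (a 4) + f (a 4) (a 0) (a 2) + f (a 3) (a 2) (a 0) + f (a 0) (a 4) (a 3))
    + (f (a 3) (a 4) (a 0) + f (a 0) (a 1) (a 3) + f (a 4) (a 3) (a 1) + f (a 1) (a 0) (a 4))
    + (f (a 4) (a 0) (a 1) + f (a 1) (a 2) (a 4) + f (a 0) (a 4) (a 2) + f (a 2) (a 1) (a 0))
    = 0
  rw [hswap (a 0) (a 1) (a 3), hswap (a 2) (a 3) (a 0), hswap (a 2) (a 1) (a 4),
    hswap (a 3) (a 4) (a 1), hswap (a 0) (a 4) (a 2), hrev (a 0) (a 1) (a 2),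
    hrev (a 1) (a 2) (a 3), hrev (a 2) (a 3) (a 4), hrev (a 3) (a 4) (a 0),
    hrev (a 4) (a 0) (a 1)]
  abel

end FiveTerm

section Wedge

variable {R M : Type*} [CommRing R] [AddCommGroup M] [Module R M]

theorem wedge_swap (u v : M) : wedge R v u = -wedge R u v := by
  apply Subtype.ext
  change ExteriorAlgebra.ιMulti R 2 ![v, u] = -ExteriorAlgebra.ιMulti R 2 ![u, v]
  rw [← (ExteriorAlgebra.ιMulti R 2).map_swap ![u, v] (i := 0) (j := 1) (by decide)]
  congr 1
  ext i
  fin_cases i <;> rfl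

noncomputable def wedgeCycle (R : Type*) [CommRing R] {M : Type*} [AddCommGroup M] [Module R M]
    (u v w : M) : ⋀[R]^2 M :=
  wedge R u v + wedge R v w + wedge R w u

theorem wedgeCycle_swap_right (u v w : M) : wedgeCycle R u w v = -wedgeCycle R u v w := by
  rw [wedgeCycle, wedgeCycle, wedge_swap u v, wedge_swap v w, wedge_swap w u]
  abel

theorem wedgeCycle_reverse (u v w : M) : wedgeCycle R w v u = -wedgeCycle R u v w := by
  rw [wedgeCycle, wedgeCycle, wedge_swap u v, wedge_swap v w, wedge_swap w u]
  abel

end Wedge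

section Phi

variable {R M G : Type*} [CommRing R] [AddCommGroup M] [Module R M] [AddCommGroup G]
  {g : G → M}

theorem add_sub_comm_of_even (hg : ∀ x, g (-x) = g x) (x y : G) :
    g (x + y) + g (x - y) = g (y + x) + g (y - x) := by
  rw [← neg_sub, hg, add_comm x]

theorem phi_eq_wedgeCycle (hg : ∀ x, g (-x) = g x) (x y z : G) :
    phi R g x y z = wedgeCycle R (g (x + z) + g (x - z)) (g (x + y) + g (x - y))
      (g (y + z) + g (y - z)) := by
  simp only [phi, wedgeCycle, add_sub_comm_of_even hg z, add_sub_comm_of_even hg y x]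

theorem phi_swap (hg : ∀ x, g (-x) = g x) (x y z : G) :
    phi R g y x z = -phi R g x y z := by
  rw [phi_eq_wedgeCycle hg, phi_eq_wedgeCycle hg, add_sub_comm_of_even hg y x,
    ← wedgeCycle_reverse]

theorem phi_reverse (hg : ∀ x, g (-x) = g x) (x y z : G) :
    phi R g z y x = -phi R g x y z := by
  rw [phi_eq_wedgeCycle hg, phi_eq_wedgeCycle hg, add_sub_comm_of_even hg z x,
    add_sub_comm_of_even hg z y, add_sub_comm_of_even hg y x, ← wedgeCycle_swap_right]

end Phi

/-- The five-term relation (eq 5term) for the elements `δ`. -/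
theorem delta_five_term {A G : Type*} [AddCommGroup A] [AddCommGroup G]
    (g : G → A) (hg : ∀ x : G, g (-x) = g x) (a : ZMod 5 → G) :
    ∑ i : ZMod 5, delta ℤ g (a i) (a (i + 1)) (a (i + 2)) (a (i + 3)) = 0 :=
  sum_zmod_five_eq_zero_of_antisymm (phi ℤ g) (phi_swap hg) (phi_reverse hg) a
end
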